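/- Given reals λ̂₁ ≥ λ̂₂ ≥ ⋯ ≥ λ̂ₖ and 0 < β̂₁ ≤ β̂₂ ≤ ⋯ ≤ β̂ₖ, the vector θ defined by θ_ℓ = β̂_ℓ for ℓ = 1,…,k is an optimal solution of the problem: minimize Σ_{ℓ=1}^k λ̂_ℓ θ_ℓ over θ ∈ ℝᵏ₊ with θ₁ ≤ ⋯ ≤ θₖ, subject to Σ_{ℓ=j+1}^k θ_ℓ ≤ Σ_{ℓ=j+1}^k β̂_ℓ for j = 1,…,k−1, and Σ_{ℓ=1}^k θ_ℓ = Σ_{ℓ=1}^k β̂_ℓ. -/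

import Mathlib

/-!
Summation by parts writes `∑ λ_ℓ θ_ℓ` as `λ₁ ∑ θ + ∑_j (λ_{j+1} - λ_j) · (∑_{ℓ > j} θ_ℓ)`.
The first term is the same for every feasible `θ`, and each increment `λ_{j+1} - λ_j` is `≤ 0`,
so the objective can only grow when the tail sums shrink below those of `β`.
-/

open Finset

section TailSum

variable {R : Type*} {k : ℕ}

def tailSum [AddCommMonoid R] (x : Fin k → R) (j : ℕ) : R :=
  ∑ ℓ : Fin k, if j ≤ (ℓ : ℕ) then x ℓ else 0

lemma tailSum_zero [AddCommMonoid R] (x : Fin k → R) : tailSum x 0 = ∑ ℓ, x ℓ := by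
  simp [tailSum]

lemma sum_mul_eq_mul_tailSum_zero_add_sum [CommRing R] (w : ℕ → R) (x : Fin k → R) :
    ∑ ℓ : Fin k, w ℓ * x ℓ
      = w 0 * tailSum x 0 + ∑ j ∈ range (k - 1), (w (j + 1) - w j) * tailSum x (j + 1) := by
  have hswap : ∑ j ∈ range (k - 1), (w (j + 1) - w j) * tailSum x (j + 1)
      = ∑ ℓ : Fin k, (w ℓ - w 0) * x ℓ := by
    simp only [tailSum, mul_sum, mul_ite, mul_zero]
    rw [sum_comm]
    refine sum_congr rfl fun ℓ _ => ?_
    rw [← sum_filter, ← sum_mul]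
    have hrange : (range (k - 1)).filter (fun j => j + 1 ≤ (ℓ : ℕ)) = range ℓ := by
      ext j
      simp only [mem_filter, mem_range]
      omega
    rw [hrange, sum_range_sub]
  rw [hswap, tailSum_zero, mul_sum, ← sum_add_distrib]
  exact sum_congr rfl fun ℓ _ => by ring

lemma sum_mul_le_sum_mul_of_tailSum_le [CommRing R] [LinearOrder R] [IsStrictOrderedRing R]
    {w x y : Fin k → R} (hw : Antitone w) (hsum : ∑ ℓ, x ℓ = ∑ ℓ, y ℓ)
    (htail : ∀ j : ℕ, 0 < j → j < k → tailSum x j ≤ tailSum y j) :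
    ∑ ℓ, w ℓ * y ℓ ≤ ∑ ℓ, w ℓ * x ℓ := by
  set g : ℕ → R := fun n => if h : n < k then w ⟨n, h⟩ else 0
  have hg (ℓ : Fin k) : g ℓ = w ℓ := dif_pos ℓ.isLt
  simp only [← hg, sum_mul_eq_mul_tailSum_zero_add_sum g, tailSum_zero, hsum]
  refine add_le_add le_rfl (sum_le_sum fun j hj => ?_)
  rw [mem_range] at hj
  have hstep : g (j + 1) ≤ g j := by
    simp only [g, dif_pos (show j + 1 < k by omega), dif_pos (show j < k by omega)]
    exact hw (Fin.mk_le_mk.mpr j.le_succ)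
  exact mul_le_mul_of_nonpos_left (htail (j + 1) j.succ_pos (by omega)) (sub_nonpos.mpr hstep)

end TailSum

theorem stmt_2_general (k : ℕ) (lam beta : Fin k → ℝ)
    (hlam : ∀ i j : Fin k, i ≤ j → lam j ≤ lam i) :
    ∀ θ : Fin k → ℝ,
      (∀ i, 0 ≤ θ i) →
      (∀ i j : Fin k, i ≤ j → θ i ≤ θ j) →
      (∀ j : ℕ, 0 < j → j < k →
        (∑ ℓ : Fin k, if j ≤ (ℓ : ℕ) then θ ℓ else 0)
          ≤ ∑ ℓ : Fin k, if j ≤ (ℓ : ℕ) then beta ℓ else 0) →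
      (∑ ℓ, θ ℓ) = (∑ ℓ, beta ℓ) →
      (∑ ℓ, lam ℓ * beta ℓ) ≤ ∑ ℓ, lam ℓ * θ ℓ :=
  fun _ _ _ htail hsum => sum_mul_le_sum_mul_of_tailSum_le (fun _ _ h => hlam _ _ h) hsum htail

/-- Given `lam₁ ≥ ⋯ ≥ lamₖ` and `0 < β₁ ≤ ⋯ ≤ βₖ`, the vector `θ := β` is optimal for
minimizing `∑ lam_ℓ θ_ℓ` over nonnegative nondecreasing `θ` satisfying the tail-sum
constraints `∑_{ℓ=j+1}^k θ_ℓ ≤ ∑_{ℓ=j+1}^k β_ℓ` (for `j = 1,…,k-1`) and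
`∑_{ℓ=1}^k θ_ℓ = ∑_{ℓ=1}^k β_ℓ`. -/
theorem stmt_2 (k : ℕ) (lam beta : Fin k → ℝ)
    (hlam : ∀ i j : Fin k, i ≤ j → lam j ≤ lam i)
    (hbpos : ∀ i, 0 < beta i)
    (hbmono : ∀ i j : Fin k, i ≤ j → beta i ≤ beta j) :
    ∀ θ : Fin k → ℝ,
      (∀ i, 0 ≤ θ i) →
      (∀ i j : Fin k, i ≤ j → θ i ≤ θ j) →
      (∀ j : ℕ, 0 < j → j < k →
        (∑ ℓ : Fin k, if j ≤ (ℓ : ℕ) then θ ℓ else 0)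
          ≤ ∑ ℓ : Fin k, if j ≤ (ℓ : ℕ) then beta ℓ else 0) →
      (∑ ℓ, θ ℓ) = (∑ ℓ, beta ℓ) →
      (∑ ℓ, lam ℓ * beta ℓ) ≤ ∑ ℓ, lam ℓ * θ ℓ :=
  stmt_2_general k lam beta hlam
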